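/- (Input-to-state stability of the strongly dissipative subsystem, Lemma 4.1, discrete case) Consider the discrete delayed z₂-subsystem with input, assume the strong dissipativity condition ℓ₂₂·‖w₂₂‖ < 1, fix v_ref : Ω → ℝ^{n₂}, and let z_ref2 : Ω → ℝ^{n₂} satisfy z_ref2(r) = Σ_{r'∈Ω} w₂₂(r,r')S₂₂(z_ref2(r')) + v_ref(r) for all r ∈ Ω. Then the subsystem is input-to-state stable at z_ref2 with respect to the perturbation input: there exist a class-KL function β and a class-K∞ function ν such that for every continuous initial history z₂,₀ : [−d̄,0] → (Ω → ℝ^{n₂}) and every continuous v₂ : [0,∞) → (Ω → ℝ^{n₂}), the solution z₂ of τ₂(r)·dz₂/dt(t,r) = −z₂(t,r) + Σ_{r'∈Ω} w₂₂(r,r')S₂₂(z₂(t−d₂₂(r,r'),r')) + v_ref(r) + v₂(t,r) with history z₂,₀ satisfies, for all t ≥ 0, ‖z₂(t)−z_ref2‖ ≤ β(sup_{s∈[−d̄,0]}‖z₂,₀(s)−z_ref2‖, t) + ν(sup_{s∈[0,t]}‖v₂(s)‖). -/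

import Mathlib

/-!
Componentwise, `e = z₂ - z_ref` solves `τ_r ė_r = -e_r + g_r`, where
`‖g_r(t)‖ ≤ ∑_{r'} k_{rr'} ‖e_{r'}(t - d(r,r'))‖ + b`, with gains `k_{rr'} = ℓ₂₂ ‖w₂₂(r,r')‖`,
`q = ‖k‖ = ℓ₂₂ ‖w₂₂‖ < 1` and `b` the supremum of the input. If `m ∈ ℝ^Ω` bounds `‖e_r‖` on
`[a - d̄, T]`, variation of constants bounds `‖e_r‖` on `[a + Δ, T]` by
`e^{-Δ/τ_r} m_r + ‖k_r‖ ‖m‖ + b`. Once the transient `Δ` makes `e^{-Δ/τ_r} ≤ (1 - q)/2`, the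
ℓ²-norm of the bound contracts by `(1 + q)/2` per time step `Δ + d̄`, up to `√|Ω| b`. The
componentwise maxima on `[-d̄, T]` start the iteration: they satisfy
`‖m‖ ≤ √|Ω| (s₀ + b) + q ‖m‖`. Geometric decay in the number of steps is exponential decay in `T`.
-/

open Set Filter Topology

/-- Action of a matrix on a Euclidean vector. -/
noncomputable def mApply {n m : ℕ} (M : Matrix (Fin n) (Fin m) ℝ)
    (v : EuclideanSpace ℝ (Fin m)) : EuclideanSpace ℝ (Fin n) :=
  WithLp.toLp 2 (fun i => ∑ j, M i j * v j)

/-- Operator norm of a matrix, induced by the Euclidean norms. -/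
noncomputable def matOpNorm {n m : ℕ} (M : Matrix (Fin n) (Fin m) ℝ) : ℝ :=
  ‖LinearMap.toContinuousLinearMap (Matrix.toEuclideanLin M)‖

/-- Norm of a state `x : Ω → ℝⁿ`: `‖x‖² = ∑_r |x r|²`. -/
noncomputable def vnorm {Ω : Type*} [Fintype Ω] {n : ℕ}
    (x : Ω → EuclideanSpace ℝ (Fin n)) : ℝ :=
  Real.sqrt (∑ r, ‖x r‖ ^ 2)

/-- Operator-norm based norm of a kernel: `‖k‖² = ∑_{r,r'} ‖k(r,r')‖²_op`. -/
noncomputable def knormOp {Ω : Type*} [Fintype Ω] {n m : ℕ}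
    (k : Ω → Ω → Matrix (Fin n) (Fin m) ℝ) : ℝ :=
  Real.sqrt (∑ r, ∑ r', matOpNorm (k r r') ^ 2)

/-- A function `ν : [0,∞) → [0,∞)` of class `K∞`: continuous, strictly increasing,
`ν 0 = 0`, nonnegative, and `ν s → ∞` as `s → ∞`. -/
def ClassKinf (ν : ℝ → ℝ) : Prop :=
  ContinuousOn ν (Ici 0) ∧ StrictMonoOn ν (Ici 0) ∧ ν 0 = 0 ∧
    (∀ s ≥ (0:ℝ), 0 ≤ ν s) ∧ Tendsto ν atTop atTop

/-- A function `β : [0,∞) × [0,∞) → [0,∞)` of class `KL`: for each fixed `t`,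
`β (·, t)` is continuous, strictly increasing and vanishes at `0`; for each fixed `s`,
`β (s, ·)` is non-increasing and tends to `0` at `∞`; and `β` is nonnegative. -/
def ClassKL (β : ℝ → ℝ → ℝ) : Prop :=
  (∀ t ≥ (0:ℝ), ContinuousOn (fun s => β s t) (Ici 0) ∧
    StrictMonoOn (fun s => β s t) (Ici 0) ∧ β 0 t = 0) ∧
  (∀ s ≥ (0:ℝ), AntitoneOn (fun t => β s t) (Ici 0) ∧
    Tendsto (fun t => β s t) atTop (nhds 0)) ∧
  (∀ s ≥ (0:ℝ), ∀ t ≥ (0:ℝ), 0 ≤ β s t)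

open Real

theorem norm_le_exp_mul_add_of_hasDerivWithinAt {E : Type*} [NormedAddCommGroup E]
    [NormedSpace ℝ E] {h g : ℝ → E} {τ a b G : ℝ} (hτ : 0 < τ) (hG : 0 ≤ G)
    (hcont : ContinuousOn h (Icc a b))
    (hderiv : ∀ t ∈ Ico a b, HasDerivWithinAt h (τ⁻¹ • (g t - h t)) (Ici t) t)
    (hg : ∀ t ∈ Ico a b, ‖g t‖ ≤ G) {t : ℝ} (ht : t ∈ Icc a b) :
    ‖h t‖ ≤ exp (-((t - a) / τ)) * ‖h a‖ + G := by
  set w : ℝ → ℝ := fun t => exp ((t - a) / τ)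
  have hw : ∀ t, HasDerivAt w (w t * τ⁻¹) t := fun t => by
    simpa [w, one_div] using (((hasDerivAt_id t).sub_const a).div_const τ).exp
  have hw0 : ∀ t, 0 < w t := fun t => exp_pos _
  -- integrating factor: `w • h` has derivative `w • τ⁻¹ • g`
  have key : ‖w t • h t‖ ≤ ‖h a‖ - G + G * w t := by
    refine image_norm_le_of_norm_deriv_right_le_deriv_boundary (f' := fun t => w t • τ⁻¹ • g t)
      (B := fun s => ‖h a‖ - G + G * w s)
      ((continuous_iff_continuousAt.2 fun s => (hw s).continuousAt).continuousOn.smul hcont)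
      (fun s hs => ?_) (by simp [w]) (fun s => ((hw s).const_mul G).const_add _)
      (fun s hs => ?_) ht
    · convert (hw s).hasDerivWithinAt.smul (hderiv s hs) using 1
      simp only [smul_sub, smul_smul]
      module
    · rw [norm_smul, norm_smul, norm_inv, Real.norm_of_nonneg (hw0 s).le,
        Real.norm_of_nonneg hτ.le]
      have := hw0 s
      calc w s * (τ⁻¹ * ‖g s‖) ≤ w s * (τ⁻¹ * G) := by gcongr; exact hg s hs
        _ = G * (w s * τ⁻¹) := by ring
  have hwt := hw0 t
  rw [norm_smul, Real.norm_of_nonneg hwt.le] at key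
  calc ‖h t‖ ≤ (‖h a‖ - G + G * w t) / w t := by rw [le_div_iff₀ hwt]; linarith
    _ = (w t)⁻¹ * ‖h a‖ + G - G / w t := by field_simp; ring
    _ ≤ exp (-((t - a) / τ)) * ‖h a‖ + G := by
      rw [exp_neg]
      linarith [div_nonneg hG hwt.le]

theorem exists_nonneg_forall_exp_neg_div_le {ι : Type*} [Finite ι] {τ : ι → ℝ}
    (hτ : ∀ i, 0 < τ i) {ε : ℝ} (hε : 0 < ε) : ∃ Δ, 0 ≤ Δ ∧ ∀ i, exp (-(Δ / τ i)) ≤ ε :=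
  ((eventually_ge_atTop 0).and (eventually_all.2 fun i =>
    (tendsto_exp_atBot.comp (tendsto_neg_atTop_atBot.comp
      (tendsto_id.atTop_div_const (hτ i)))).eventually (Iic_mem_nhds hε))).exists

theorem pow_le_exp_log_mul_div {θ x : ℝ} (hθ0 : 0 < θ) (hθ1 : θ ≤ 1) {n : ℕ}
    (hn : x < n + 1) : θ ^ n ≤ exp (log θ * x) / θ := by
  calc θ ^ n = exp (n * log θ) := by rw [exp_nat_mul, exp_log hθ0]
    _ ≤ exp (log θ * x - log θ) := exp_le_exp.2 (by nlinarith [log_nonpos hθ0.le hθ1])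
    _ = exp (log θ * x) / θ := by rw [exp_sub, exp_log hθ0]

theorem classKL_mul_exp_neg {C μ : ℝ} (hC : 0 < C) (hμ : 0 < μ) :
    ClassKL fun s t => C * exp (-(μ * t)) * s := by
  refine ⟨fun t _ => ⟨by fun_prop, fun s _ s' _ h => by dsimp only; gcongr, by ring⟩,
    fun s hs => ⟨fun t _ t' _ h => by dsimp only; gcongr, ?_⟩, fun s hs t _ => by positivity⟩
  have := tendsto_exp_atBot.comp (tendsto_neg_atTop_atBot.comp (tendsto_id.const_mul_atTop hμ))
  simpa using (this.const_mul C).mul_const s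

theorem classKinf_const_mul {C : ℝ} (hC : 0 < C) : ClassKinf fun s => C * s :=
  ⟨by fun_prop, fun s _ s' _ h => by dsimp only; gcongr, by ring, fun s hs => by positivity,
    tendsto_id.const_mul_atTop hC⟩

namespace EuclideanSpace

variable {ι : Type*} [Fintype ι]

theorem norm_le_norm_of_nonneg_of_le {x y : EuclideanSpace ℝ ι} (h0 : ∀ i, 0 ≤ x i)
    (h : ∀ i, x i ≤ y i) : ‖x‖ ≤ ‖y‖ := by
  rw [EuclideanSpace.norm_eq, EuclideanSpace.norm_eq]
  gcongr with i
  simpa [abs_of_nonneg (h0 i)] using (h i).trans (le_abs_self _)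

theorem sum_mul_le_sqrt_mul_norm (f : ι → ℝ) (x : EuclideanSpace ℝ ι) :
    ∑ i, f i * x i ≤ √(∑ i, f i ^ 2) * ‖x‖ := by
  simpa [EuclideanSpace.norm_eq] using Real.sum_mul_le_sqrt_mul_sqrt Finset.univ f (x ·)

theorem norm_toLp_const (c : ℝ) :
    ‖(WithLp.toLp 2 fun _ : ι => c : EuclideanSpace ℝ ι)‖ = √(Fintype.card ι) * |c| := by
  simp [EuclideanSpace.norm_eq, Real.sqrt_sq_eq_abs]

theorem norm_toLp_sqrt_sum_sq {κ : Type*} [Fintype κ] (k : ι → κ → ℝ) :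
    ‖(WithLp.toLp 2 fun i => √(∑ j, k i j ^ 2) : EuclideanSpace ℝ ι)‖ =
      √(∑ i, ∑ j, k i j ^ 2) := by
  simp [EuclideanSpace.norm_eq, Real.sq_sqrt (Finset.sum_nonneg fun j _ => sq_nonneg (k _ j))]

end EuclideanSpace

structure IsDelayedGainSolution {Ω E : Type*} [Fintype Ω] [NormedAddCommGroup E]
    [NormedSpace ℝ E] (τ : Ω → ℝ) (k d : Ω → Ω → ℝ) (dbar b T : ℝ) (e g : ℝ → Ω → E) :
    Prop where
  continuousOn : ∀ r, ContinuousOn (fun t => e t r) (Icc (-dbar) T)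
  hasDerivWithinAt : ∀ r, ∀ t ∈ Ico 0 T,
    HasDerivWithinAt (fun s => e s r) ((τ r)⁻¹ • (g t r - e t r)) (Ici t) t
  norm_le : ∀ r, ∀ t ∈ Ico 0 T, ‖g t r‖ ≤ ∑ r', k r r' * ‖e (t - d r r') r'‖ + b

namespace IsDelayedGainSolution

variable {Ω E : Type*} [Fintype Ω] [NormedAddCommGroup E] [NormedSpace ℝ E]
  {τ : Ω → ℝ} {k d : Ω → Ω → ℝ} {dbar b T q Δ : ℝ} {e g : ℝ → Ω → E}

theorem norm_le_exp_mul_add (h : IsDelayedGainSolution τ k d dbar b T e g) {r : Ω}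
    (hτ : 0 < τ r) (hk : ∀ r', 0 ≤ k r r') (hd : ∀ r', d r r' ∈ Icc 0 dbar) (hb : 0 ≤ b)
    {m : EuclideanSpace ℝ Ω} {a u : ℝ} (hm : ∀ r', ∀ t ∈ Icc (a - dbar) T, ‖e t r'‖ ≤ m r')
    (ha : 0 ≤ a) (hu : u ∈ Icc a T) :
    ‖e u r‖ ≤ exp (-((u - a) / τ r)) * ‖e a r‖ + (√(∑ r', k r r' ^ 2) * ‖m‖ + b) := by
  refine norm_le_exp_mul_add_of_hasDerivWithinAt hτ (by positivity)
    ((h.continuousOn r).mono (Icc_subset_Icc (by linarith [(hd r).1, (hd r).2]) hu.2))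
    (fun t ht => h.hasDerivWithinAt r t ⟨ha.trans ht.1, ht.2.trans_le hu.2⟩)
    (fun t ht => ?_) ⟨hu.1, le_rfl⟩
  have hdelayed : ∀ r', ‖e (t - d r r') r'‖ ≤ m r' := fun r' =>
    hm r' _ ⟨by linarith [ht.1, (hd r').2], by linarith [ht.2, hu.2, (hd r').1]⟩
  calc ‖g t r‖ ≤ ∑ r', k r r' * ‖e (t - d r r') r'‖ + b :=
        h.norm_le r t ⟨ha.trans ht.1, ht.2.trans_le hu.2⟩
    _ ≤ ∑ r', k r r' * m r' + b := by gcongr with r'; exacts [hk r', hdelayed r']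
    _ ≤ √(∑ r', k r r' ^ 2) * ‖m‖ + b := by
      gcongr; exact EuclideanSpace.sum_mul_le_sqrt_mul_norm _ m

theorem exists_contracted_bound (h : IsDelayedGainSolution τ k d dbar b T e g)
    (hτ : ∀ r, 0 < τ r) (hk : ∀ r r', 0 ≤ k r r') (hd : ∀ r r', d r r' ∈ Icc 0 dbar)
    (hdbar : 0 ≤ dbar) (hb : 0 ≤ b) (hq : √(∑ r, ∑ r', k r r' ^ 2) ≤ q) (hq1 : q < 1)
    (hΔ0 : 0 ≤ Δ) (hΔ : ∀ r, exp (-(Δ / τ r)) ≤ (1 - q) / 2)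
    {m : EuclideanSpace ℝ Ω} {a : ℝ} (hm : ∀ r, ∀ t ∈ Icc (a - dbar) T, ‖e t r‖ ≤ m r)
    (ha : 0 ≤ a) :
    ∃ m' : EuclideanSpace ℝ Ω, (∀ r, ∀ t ∈ Icc (a + Δ) T, ‖e t r‖ ≤ m' r) ∧
      ‖m'‖ ≤ (1 + q) / 2 * ‖m‖ + √(Fintype.card Ω) * b := by
  set c : Ω → ℝ := fun r => √(∑ r', k r r' ^ 2)
  refine ⟨((1 - q) / 2) • m + ‖m‖ • WithLp.toLp 2 c + WithLp.toLp 2 fun _ => b,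
    fun r t ht => ?_, ?_⟩
  · have hdecay : exp (-((t - a) / τ r)) ≤ (1 - q) / 2 := by
      refine (exp_le_exp.2 (neg_le_neg ?_)).trans (hΔ r)
      have := hτ r
      gcongr
      linarith [ht.1]
    have hea : ‖e a r‖ ≤ m r := hm r a ⟨by linarith, by linarith [ht.1, ht.2]⟩
    have := h.norm_le_exp_mul_add (hτ r) (hk r) (hd r) hb hm ha ⟨by linarith [ht.1], ht.2⟩
    simp only [PiLp.add_apply, PiLp.smul_apply, smul_eq_mul]
    nlinarith [norm_nonneg (e a r), exp_pos (-((t - a) / τ r))]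
  · have hc : ‖(WithLp.toLp 2 c : EuclideanSpace ℝ Ω)‖ ≤ q :=
      (EuclideanSpace.norm_toLp_sqrt_sum_sq k).trans_le hq
    calc _ ≤ ‖((1 - q) / 2) • m‖ + ‖‖m‖ • (WithLp.toLp 2 c : EuclideanSpace ℝ Ω)‖
          + ‖(WithLp.toLp 2 fun _ => b : EuclideanSpace ℝ Ω)‖ := norm_add₃_le
      _ ≤ (1 - q) / 2 * ‖m‖ + ‖m‖ * q + √(Fintype.card Ω) * b := by
        rw [norm_smul, norm_smul, EuclideanSpace.norm_toLp_const,
          Real.norm_of_nonneg (by linarith), norm_norm, abs_of_nonneg hb]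
        gcongr
      _ = (1 + q) / 2 * ‖m‖ + √(Fintype.card Ω) * b := by ring

theorem exists_bound_of_history (h : IsDelayedGainSolution τ k d dbar b T e g)
    (hτ : ∀ r, 0 < τ r) (hk : ∀ r r', 0 ≤ k r r') (hd : ∀ r r', d r r' ∈ Icc 0 dbar)
    (hdbar : 0 ≤ dbar) (hb : 0 ≤ b) (hq : √(∑ r, ∑ r', k r r' ^ 2) ≤ q) (hT : 0 ≤ T)
    {s₀ : ℝ} (hs₀0 : 0 ≤ s₀) (hs₀ : ∀ r, ∀ t ∈ Icc (-dbar) 0, ‖e t r‖ ≤ s₀) :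
    ∃ m : EuclideanSpace ℝ Ω, (∀ r, ∀ t ∈ Icc (-dbar) T, ‖e t r‖ ≤ m r) ∧
      (1 - q) * ‖m‖ ≤ √(Fintype.card Ω) * (s₀ + b) := by
  set c : Ω → ℝ := fun r => √(∑ r', k r r' ^ 2)
  choose u hu hmax using fun r => isCompact_Icc.exists_isMaxOn
    (nonempty_Icc.2 (by linarith : -dbar ≤ T)) (h.continuousOn r).norm
  set m : EuclideanSpace ℝ Ω := WithLp.toLp 2 fun r => ‖e (u r) r‖
  have hm : ∀ r, ∀ t ∈ Icc (-dbar) T, ‖e t r‖ ≤ m r := fun r t ht => hmax r ht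
  refine ⟨m, hm, ?_⟩
  have hself : ∀ r, m r ≤ s₀ + b + ‖m‖ * c r := fun r => by
    have hcm : 0 ≤ ‖m‖ * c r := by positivity
    rcases le_or_gt (u r) 0 with hu0 | hu0
    · linarith [hs₀ r (u r) ⟨(hu r).1, hu0⟩]
    · have hrestart := h.norm_le_exp_mul_add (hτ r) (hk r) (hd r) hb (by simpa using hm) le_rfl
        ⟨hu0.le, (hu r).2⟩
      have hdecay : exp (-((u r - 0) / τ r)) ≤ 1 :=
        exp_le_one_iff.2 (neg_nonpos.2 (div_nonneg (by linarith) (hτ r).le))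
      have := hs₀ r 0 ⟨by linarith, le_rfl⟩
      nlinarith [norm_nonneg (e 0 r)]
  have hc : ‖(WithLp.toLp 2 c : EuclideanSpace ℝ Ω)‖ ≤ q :=
    (EuclideanSpace.norm_toLp_sqrt_sum_sq k).trans_le hq
  have : ‖m‖ ≤ √(Fintype.card Ω) * (s₀ + b) + ‖m‖ * q := calc
    ‖m‖ ≤ ‖(WithLp.toLp 2 fun _ => s₀ + b) + ‖m‖ • (WithLp.toLp 2 c : EuclideanSpace ℝ Ω)‖ :=
      EuclideanSpace.norm_le_norm_of_nonneg_of_le (fun r => norm_nonneg _) fun r => by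
        simpa using hself r
    _ ≤ _ := by
      grw [norm_add_le, norm_smul, EuclideanSpace.norm_toLp_const, norm_norm, hc,
        abs_of_nonneg (by positivity)]
  linarith

theorem exists_geometric_bound (h : IsDelayedGainSolution τ k d dbar b T e g)
    (hτ : ∀ r, 0 < τ r) (hk : ∀ r r', 0 ≤ k r r') (hd : ∀ r r', d r r' ∈ Icc 0 dbar)
    (hdbar : 0 ≤ dbar) (hb : 0 ≤ b) (hq : √(∑ r, ∑ r', k r r' ^ 2) ≤ q) (hq1 : q < 1)
    (hΔ0 : 0 ≤ Δ) (hΔ : ∀ r, exp (-(Δ / τ r)) ≤ (1 - q) / 2)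
    {m₀ : EuclideanSpace ℝ Ω} (hm₀ : ∀ r, ∀ t ∈ Icc (-dbar) T, ‖e t r‖ ≤ m₀ r) (n : ℕ) :
    ∃ m : EuclideanSpace ℝ Ω, (∀ r, ∀ t ∈ Icc (n * (Δ + dbar) - dbar) T, ‖e t r‖ ≤ m r) ∧
      ‖m‖ ≤ ((1 + q) / 2) ^ n * ‖m₀‖ + 2 * √(Fintype.card Ω) * b / (1 - q) := by
  have hq0 : 0 ≤ q := (Real.sqrt_nonneg _).trans hq
  induction n with
  | zero =>
    exact ⟨m₀, by simpa using hm₀,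
      by simpa using div_nonneg (by positivity) (by linarith : (0 : ℝ) ≤ 1 - q)⟩
  | succ n ih =>
    obtain ⟨m, hm, hmn⟩ := ih
    obtain ⟨m', hm', hm'n⟩ := h.exists_contracted_bound hτ hk hd hdbar hb hq hq1 hΔ0 hΔ hm
      (mul_nonneg n.cast_nonneg (by linarith))
    refine ⟨m', fun r t ht => hm' r t ⟨by push_cast at ht; linarith [ht.1], ht.2⟩, ?_⟩
    calc ‖m'‖ ≤ (1 + q) / 2 * ‖m‖ + √(Fintype.card Ω) * b := hm'n
      _ ≤ (1 + q) / 2 * (((1 + q) / 2) ^ n * ‖m₀‖ + 2 * √(Fintype.card Ω) * b / (1 - q))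
          + √(Fintype.card Ω) * b := by gcongr
      _ = ((1 + q) / 2) ^ (n + 1) * ‖m₀‖ + 2 * √(Fintype.card Ω) * b / (1 - q) := by
        field_simp [(by linarith : (1 : ℝ) - q ≠ 0)]
        ring

end IsDelayedGainSolution

theorem exists_exp_bound_of_isDelayedGainSolution {Ω E : Type*} [Fintype Ω] [Nonempty Ω]
    [NormedAddCommGroup E] [NormedSpace ℝ E] {τ : Ω → ℝ} {k d : Ω → Ω → ℝ} {dbar q : ℝ}
    (hτ : ∀ r, 0 < τ r) (hk : ∀ r r', 0 ≤ k r r') (hd : ∀ r r', d r r' ∈ Icc 0 dbar)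
    (hdbar : 0 < dbar) (hq : √(∑ r, ∑ r', k r r' ^ 2) ≤ q) (hq1 : q < 1) :
    ∃ Cβ Cν μ : ℝ, 0 < Cβ ∧ 0 < Cν ∧ 0 < μ ∧
      ∀ (e g : ℝ → Ω → E) (b T s₀ : ℝ), IsDelayedGainSolution τ k d dbar b T e g →
        0 ≤ b → 0 ≤ T → (∀ r, ∀ t ∈ Icc (-dbar) 0, ‖e t r‖ ≤ s₀) →
        ‖(WithLp.toLp 2 fun r => ‖e T r‖ : EuclideanSpace ℝ Ω)‖ ≤
          Cβ * exp (-(μ * T)) * s₀ + Cν * b := by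
  have hq0 : 0 ≤ q := (Real.sqrt_nonneg _).trans hq
  obtain ⟨Δ, hΔ0, hΔ⟩ := exists_nonneg_forall_exp_neg_div_le hτ (by linarith : 0 < (1 - q) / 2)
  set θ := (1 + q) / 2 with hθ
  set L := Δ + dbar
  set μ := -log θ / L with hμ
  set κ := √(Fintype.card Ω)
  have hθ0 : 0 < θ := by positivity
  have hθ1 : θ < 1 := by rw [hθ]; linarith
  have hL : 0 < L := by positivity
  have hκ : 0 < κ := Real.sqrt_pos.2 (by exact_mod_cast Fintype.card_pos)
  refine ⟨2 * κ / (1 - q), 4 * κ / (1 - q), μ, div_pos (by positivity) (by linarith),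
    div_pos (by positivity) (by linarith), div_pos (neg_pos.2 (log_neg hθ0 hθ1)) hL,
    fun e g b T s₀ h hb hT hs₀ => ?_⟩
  obtain ⟨r⟩ := ‹Nonempty Ω›
  have hs₀0 : 0 ≤ s₀ := (norm_nonneg _).trans (hs₀ r 0 ⟨by linarith, le_rfl⟩)
  obtain ⟨m₀, hm₀, hm₀n⟩ := h.exists_bound_of_history hτ hk hd hdbar.le hb hq hT hs₀0 hs₀
  have hm₀n' : ‖m₀‖ ≤ κ * (s₀ + b) / (1 - q) := by
    rw [le_div_iff₀ (by linarith)]; linarith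
  set n := ⌊(T + dbar) / L⌋₊
  obtain ⟨m, hm, hmn⟩ := h.exists_geometric_bound hτ hk hd hdbar.le hb hq hq1 hΔ0 hΔ hm₀ n
  have hTn : n * L - dbar ≤ T := by
    linarith [(le_div_iff₀ hL).1 (Nat.floor_le (by positivity : 0 ≤ (T + dbar) / L))]
  have hθn : θ ^ n ≤ exp (-(μ * T)) / θ := by
    convert pow_le_exp_log_mul_div hθ0 hθ1.le (x := T / L)
      (lt_of_le_of_lt (by gcongr; linarith) (Nat.lt_floor_add_one ((T + dbar) / L))) using 3
    rw [hμ]; ring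
  have hexp : exp (-(μ * T)) ≤ 1 :=
    exp_le_one_iff.2 (neg_nonpos.2 (mul_nonneg (div_pos (neg_pos.2 (log_neg hθ0 hθ1)) hL).le hT))
  calc _ ≤ ‖m‖ := EuclideanSpace.norm_le_norm_of_nonneg_of_le (fun r => norm_nonneg _)
        fun r => hm r T ⟨hTn, le_rfl⟩
    _ ≤ θ ^ n * ‖m₀‖ + 2 * κ * b / (1 - q) := hmn
    _ ≤ exp (-(μ * T)) / θ * (κ * (s₀ + b) / (1 - q)) + 2 * κ * b / (1 - q) := by gcongr
    _ ≤ 2 * exp (-(μ * T)) * (κ * (s₀ + b) / (1 - q)) + 2 * κ * b / (1 - q) := by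
      gcongr
      rw [div_le_iff₀ hθ0]
      nlinarith [exp_pos (-(μ * T))]
    _ = 2 * κ / (1 - q) * exp (-(μ * T)) * s₀ + 2 * κ / (1 - q) * (exp (-(μ * T)) * b + b) := by
      ring
    _ ≤ 2 * κ / (1 - q) * exp (-(μ * T)) * s₀ + 2 * κ / (1 - q) * (2 * b) := by
      gcongr
      linarith [mul_le_of_le_one_left hb hexp]
    _ = _ := by ring

section Subsystem

variable {Ω : Type*} [Fintype Ω] {n : ℕ}

theorem vnorm_eq_norm (x : Ω → EuclideanSpace ℝ (Fin n)) :
    vnorm x = ‖(WithLp.toLp 2 fun r => ‖x r‖ : EuclideanSpace ℝ Ω)‖ := by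
  simp [vnorm, EuclideanSpace.norm_eq]

theorem norm_le_vnorm (x : Ω → EuclideanSpace ℝ (Fin n)) (r : Ω) : ‖x r‖ ≤ vnorm x := by
  simpa [vnorm_eq_norm] using PiLp.norm_apply_le (WithLp.toLp 2 fun r => ‖x r‖) r

theorem vnorm_nonneg (x : Ω → EuclideanSpace ℝ (Fin n)) : 0 ≤ vnorm x :=
  Real.sqrt_nonneg _

theorem continuous_vnorm : Continuous (vnorm : (Ω → EuclideanSpace ℝ (Fin n)) → ℝ) := by
  unfold vnorm
  fun_prop

theorem vnorm_le_iSup_Icc {x : ℝ → Ω → EuclideanSpace ℝ (Fin n)} {a b t : ℝ}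
    (hx : ContinuousOn x (Icc a b)) (ht : t ∈ Icc a b) :
    vnorm (x t) ≤ ⨆ s : Icc a b, vnorm (x s) :=
  le_ciSup (by simpa [image_eq_range] using
    isCompact_Icc.bddAbove_image (continuous_vnorm.comp_continuousOn hx)) (⟨t, ht⟩ : Icc a b)

theorem norm_mApply_le {m : ℕ} (M : Matrix (Fin n) (Fin m) ℝ) (v : EuclideanSpace ℝ (Fin m)) :
    ‖mApply M v‖ ≤ matOpNorm M * ‖v‖ :=
  (LinearMap.toContinuousLinearMap (Matrix.toEuclideanLin M)).le_opNorm v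

theorem mApply_sub {m : ℕ} (M : Matrix (Fin n) (Fin m) ℝ) (u v : EuclideanSpace ℝ (Fin m)) :
    mApply M (u - v) = mApply M u - mApply M v :=
  map_sub (Matrix.toEuclideanLin M) u v

theorem sqrt_sum_sum_sq_mul_matOpNorm {l : ℝ} (hl : 0 ≤ l)
    (w : Ω → Ω → Matrix (Fin n) (Fin n) ℝ) :
    √(∑ r, ∑ r', (l * matOpNorm (w r r')) ^ 2) = l * knormOp w := by
  simp only [knormOp, mul_pow, ← Finset.mul_sum]
  rw [Real.sqrt_mul (sq_nonneg l), Real.sqrt_sq hl]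

theorem isDelayedGainSolution_sub {τ : Ω → ℝ}
    {S : EuclideanSpace ℝ (Fin n) → EuclideanSpace ℝ (Fin n)} {l : ℝ}
    (hl : ∀ x y, ‖S x - S y‖ ≤ l * ‖x - y‖) {w : Ω → Ω → Matrix (Fin n) (Fin n) ℝ}
    {d : Ω → Ω → ℝ} {vref zref : Ω → EuclideanSpace ℝ (Fin n)}
    (hzref : ∀ r, zref r = (∑ r', mApply (w r r') (S (zref r'))) + vref r)
    {dbar b T : ℝ} {v z : ℝ → Ω → EuclideanSpace ℝ (Fin n)}
    (hz : ContinuousOn z (Ici (-dbar)))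
    (hdz : ∀ t ≥ (0:ℝ), ∀ r, HasDerivWithinAt (fun s => z s r)
      ((τ r)⁻¹ • (-(z t r) + (∑ r', mApply (w r r') (S (z (t - d r r') r'))) + vref r + v t r))
      (Ici 0) t)
    (hv : ∀ t ∈ Ico 0 T, ∀ r, ‖v t r‖ ≤ b) :
    IsDelayedGainSolution τ (fun r r' => l * matOpNorm (w r r')) d dbar b T
      (fun t r => z t r - zref r)
      (fun t r => (∑ r', mApply (w r r') (S (z (t - d r r') r') - S (zref r'))) + v t r) where
  continuousOn r :=
    (((continuous_apply r).comp_continuousOn hz).sub continuousOn_const).mono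
      Icc_subset_Ici_self
  hasDerivWithinAt r t ht := by
    convert ((hdz t ht.1 r).sub_const (zref r)).mono (Ici_subset_Ici.2 ht.1) using 2
    simp only [mApply_sub, Finset.sum_sub_distrib]
    rw [hzref r]
    abel
  norm_le r t ht := by
    refine (norm_add_le _ _).trans (add_le_add ((norm_sum_le _ _).trans
      (Finset.sum_le_sum fun r' _ => ?_)) (hv t ht r))
    calc _ ≤ matOpNorm (w r r') * ‖S (z (t - d r r') r') - S (zref r')‖ := norm_mApply_le _ _
      _ ≤ matOpNorm (w r r') * (l * ‖z (t - d r r') r' - zref r'‖) :=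
        mul_le_mul_of_nonneg_left (hl _ _) (norm_nonneg _)
      _ = _ := by ring

end Subsystem

theorem iss_of_strongly_dissipative_subsystem_general
    {Ω : Type*} [Fintype Ω] [Nonempty Ω]
    {n₂ : ℕ} (hn₂ : 0 < n₂)
    (dbar : ℝ) (hdbar : 0 < dbar)
    (τ₂ : Ω → ℝ) (hτ₂ : ∀ r, 0 < τ₂ r)
    (S₂₂ : EuclideanSpace ℝ (Fin n₂) → EuclideanSpace ℝ (Fin n₂))
    (l₂₂ : ℝ) (hl₂₂ : ∀ x y, ‖S₂₂ x - S₂₂ y‖ ≤ l₂₂ * ‖x - y‖)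
    (w₂₂ : Ω → Ω → Matrix (Fin n₂) (Fin n₂) ℝ)
    (d₂₂ : Ω → Ω → ℝ) (hd₂₂ : ∀ r r', d₂₂ r r' ∈ Icc 0 dbar)
    -- strong dissipativity
    (hdiss : l₂₂ * knormOp w₂₂ < 1)
    -- stationary state associated with the constant input v_ref
    (vref : Ω → EuclideanSpace ℝ (Fin n₂))
    (zref2 : Ω → EuclideanSpace ℝ (Fin n₂))
    (hzref2 : ∀ r, zref2 r = (∑ r', mApply (w₂₂ r r') (S₂₂ (zref2 r'))) + vref r) :
    ∃ β : ℝ → ℝ → ℝ, ∃ ν : ℝ → ℝ, ClassKL β ∧ ClassKinf ν ∧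
      ∀ (z₂0 : ℝ → Ω → EuclideanSpace ℝ (Fin n₂)),
        ContinuousOn z₂0 (Icc (-dbar) 0) →
      ∀ (v₂ : ℝ → Ω → EuclideanSpace ℝ (Fin n₂)),
        ContinuousOn v₂ (Ici 0) →
      ∀ (z₂ : ℝ → Ω → EuclideanSpace ℝ (Fin n₂)),
        ContinuousOn z₂ (Ici (-dbar)) →
        (∀ s ∈ Icc (-dbar) (0:ℝ), z₂ s = z₂0 s) →
        (∀ t ≥ (0:ℝ), ∀ r, HasDerivWithinAt (fun s => z₂ s r)
          ((τ₂ r)⁻¹ • (-(z₂ t r)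
            + (∑ r', mApply (w₂₂ r r') (S₂₂ (z₂ (t - d₂₂ r r') r')))
            + vref r + v₂ t r)) (Ici 0) t) →
        ∀ t ≥ (0:ℝ),
          vnorm (fun r => z₂ t r - zref2 r)
            ≤ β (⨆ s : Icc (-dbar) (0:ℝ), vnorm (fun r => z₂0 s.1 r - zref2 r)) t
              + ν (⨆ s : Icc (0:ℝ) t, vnorm (fun r => v₂ s.1 r)) := by
  have hl₂₂0 : 0 ≤ l₂₂ := by
    have := hl₂₂ (EuclideanSpace.single ⟨0, hn₂⟩ 1) 0
    simp only [sub_zero, PiLp.norm_single, norm_one, mul_one] at this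
    exact (norm_nonneg _).trans this
  obtain ⟨Cβ, Cν, μ, hCβ, hCν, hμ, hiss⟩ :=
    exists_exp_bound_of_isDelayedGainSolution (E := EuclideanSpace ℝ (Fin n₂)) hτ₂
      (fun r r' => mul_nonneg hl₂₂0 (norm_nonneg _)) hd₂₂ hdbar
      (sqrt_sum_sum_sq_mul_matOpNorm hl₂₂0 w₂₂).le hdiss
  refine ⟨fun s t => Cβ * exp (-(μ * t)) * s, fun s => Cν * s, classKL_mul_exp_neg hCβ hμ,
    classKinf_const_mul hCν, fun z₂0 hz₂0 v₂ hv₂ z₂ hz₂ hhist hdz T hT => ?_⟩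
  have hv₂T : ContinuousOn v₂ (Icc 0 T) := hv₂.mono Icc_subset_Ici_self
  have hsol := isDelayedGainSolution_sub (τ := τ₂) (dbar := dbar) (T := T) hl₂₂ hzref2 hz₂ hdz
    fun t ht r => (norm_le_vnorm _ r).trans (vnorm_le_iSup_Icc hv₂T ⟨ht.1, ht.2.le⟩)
  have hb : 0 ≤ ⨆ s : Icc (0:ℝ) T, vnorm (fun r => v₂ s.1 r) :=
    (vnorm_nonneg _).trans (vnorm_le_iSup_Icc hv₂T ⟨le_rfl, hT⟩)
  have hhist' : ∀ r, ∀ t ∈ Icc (-dbar) 0, ‖z₂ t r - zref2 r‖ ≤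
      ⨆ s : Icc (-dbar) (0:ℝ), vnorm (fun r => z₂0 s.1 r - zref2 r) := fun r t ht => by
    rw [hhist t ht]
    exact (norm_le_vnorm (fun r => z₂0 t r - zref2 r) r).trans
      (vnorm_le_iSup_Icc (x := fun s r => z₂0 s r - zref2 r) (hz₂0.sub continuousOn_const) ht)
  rw [vnorm_eq_norm]
  simpa only using hiss _ _ _ T _ hsol hb hT hhist'

/-- **Input-to-state stability of the strongly dissipative subsystem**
(Lemma 4.1, discrete case). Under `ℓ₂₂·‖w₂₂‖ < 1`, the delayed `z₂`-subsystem is ISS at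
the stationary state `z_ref2` with respect to the perturbation input `v₂`. -/
theorem iss_of_strongly_dissipative_subsystem
    {Ω : Type*} [Fintype Ω] [Nonempty Ω]
    {n₂ : ℕ} (hn₂ : 0 < n₂)
    (dbar : ℝ) (hdbar : 0 < dbar)
    (τ₂ : Ω → ℝ) (hτ₂ : ∀ r, 0 < τ₂ r)
    (S₂₂ : EuclideanSpace ℝ (Fin n₂) → EuclideanSpace ℝ (Fin n₂))
    (Sb₂₂ : ℝ) (hSb₂₂ : ∀ x, ‖S₂₂ x‖ ≤ Sb₂₂)
    (l₂₂ : ℝ) (hl₂₂ : ∀ x y, ‖S₂₂ x - S₂₂ y‖ ≤ l₂₂ * ‖x - y‖)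
    (w₂₂ : Ω → Ω → Matrix (Fin n₂) (Fin n₂) ℝ)
    (d₂₂ : Ω → Ω → ℝ) (hd₂₂ : ∀ r r', d₂₂ r r' ∈ Icc 0 dbar)
    -- strong dissipativity
    (hdiss : l₂₂ * knormOp w₂₂ < 1)
    -- stationary state associated with the constant input v_ref
    (vref : Ω → EuclideanSpace ℝ (Fin n₂))
    (zref2 : Ω → EuclideanSpace ℝ (Fin n₂))
    (hzref2 : ∀ r, zref2 r = (∑ r', mApply (w₂₂ r r') (S₂₂ (zref2 r'))) + vref r) :
    ∃ β : ℝ → ℝ → ℝ, ∃ ν : ℝ → ℝ, ClassKL β ∧ ClassKinf ν ∧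
      ∀ (z₂0 : ℝ → Ω → EuclideanSpace ℝ (Fin n₂)),
        ContinuousOn z₂0 (Icc (-dbar) 0) →
      ∀ (v₂ : ℝ → Ω → EuclideanSpace ℝ (Fin n₂)),
        ContinuousOn v₂ (Ici 0) →
      ∀ (z₂ : ℝ → Ω → EuclideanSpace ℝ (Fin n₂)),
        ContinuousOn z₂ (Ici (-dbar)) →
        (∀ s ∈ Icc (-dbar) (0:ℝ), z₂ s = z₂0 s) →
        (∀ t ≥ (0:ℝ), ∀ r, HasDerivWithinAt (fun s => z₂ s r)
          ((τ₂ r)⁻¹ • (-(z₂ t r)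
            + (∑ r', mApply (w₂₂ r r') (S₂₂ (z₂ (t - d₂₂ r r') r')))
            + vref r + v₂ t r)) (Ici 0) t) →
        ∀ t ≥ (0:ℝ),
          vnorm (fun r => z₂ t r - zref2 r)
            ≤ β (⨆ s : Icc (-dbar) (0:ℝ), vnorm (fun r => z₂0 s.1 r - zref2 r)) t
              + ν (⨆ s : Icc (0:ℝ) t, vnorm (fun r => v₂ s.1 r)) :=
  iss_of_strongly_dissipative_subsystem_general hn₂ dbar hdbar τ₂ hτ₂ S₂₂ l₂₂ hl₂₂ w₂₂ d₂₂ hd₂₂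
    hdiss vref zref2 hzref2
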